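/- If the approximate misfit Φ^a is in L¹_{μ_θ} and the joint misfit Φ^j is in L¹_{μ_θ⊗μ_δ}, then the joint posterior μ^j := (μ_θ⊗μ_δ)_{Φ^j} and the lifted approximate posterior μ^a_{θ,δ} := (μ_θ)_{Φ^a} ⊗ μ_δ satisfy max{ d_KL(μ^a_{θ,δ} ‖ μ^j), d_KL(μ^j ‖ μ^a_{θ,δ}) } ≤ C · ( ∫∫ |O(e(θ,w))|²_{Σ_η^{−1}} d(μ_θ⊗μ_δ)(θ,w) )^{1/2}, where C = 2^{1/2} · exp( 2‖Φ^j‖_{L¹_{μ_θ⊗μ_δ}} + 2‖Φ^a‖_{L¹_{μ_θ}} ) · ( ‖Φ^j‖_{L¹_{μ_θ⊗μ_δ}}^{1/2} + ‖Φ^a‖_{L¹_{μ_θ}}^{1/2} ). -/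

import Mathlib

/-!
Both posteriors are tilts of the same reference measure `μθ ⊗ μδ`, because tilting the first
factor commutes with taking the product. For misfits `Φ₁, Φ₂ ≥ 0` the log-likelihood ratio of
the two tilts is `Φ₂ - Φ₁ + log (Z₂ / Z₁)`. The density of `μ_{Φ₁}` is at most
`1 / Z₁ ≤ exp ‖Φ₁‖₁` (Jensen), and `log (Z₂ / Z₁) ≤ (Z₂ - Z₁) / Z₁ ≤ ‖Φ₁ - Φ₂‖₁ / Z₁` because
`exp (-·)` is 1-Lipschitz on `[0, ∞)`; hence the divergence is at most
`2 exp ‖Φ₁‖₁ ‖Φ₁ - Φ₂‖₁`. Factoring `Γ⁻¹ = Lᵀ L` turns the misfits into `‖a‖² / 2` and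
`‖b‖² / 2` with `a - b = L (O e)`, and `|‖a‖² - ‖b‖²| ≤ ‖a - b‖ (‖a‖ + ‖b‖)` followed by
Cauchy–Schwarz bounds `‖Φ₁ - Φ₂‖₁` by `‖L (O e)‖_{L²} (‖a‖_{L²} + ‖b‖_{L²}) / 2`.
-/

open MeasureTheory Real Matrix ENNReal

open Classical in
/-- Kullback--Leibler divergence. -/
noncomputable def KLdiv {X : Type*} [MeasurableSpace X] (μ ν : Measure X) : ℝ≥0∞ :=
  if μ ≪ ν ∧ Integrable (fun x => Real.log ((μ.rnDeriv ν x).toReal)) μ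
  then ENNReal.ofReal (∫ x, Real.log ((μ.rnDeriv ν x).toReal) ∂μ)
  else ⊤

/-- The posterior measure `μ_Φ` with density `exp (-Φ) / Z` w.r.t. `μ`. -/
noncomputable def posterior {X : Type*} [MeasurableSpace X] (μ : Measure X) (Φ : X → ℝ) :
    Measure X :=
  μ.withDensity fun x => ENNReal.ofReal (Real.exp (-Φ x) / ∫ x', Real.exp (-Φ x') ∂μ)

open scoped MatrixOrder in
lemma Matrix.PosSemidef.exists_dotProduct_mulVec_eq_norm_sq {ι : Type*} [Fintype ι]
    {A : Matrix ι ι ℝ} (hA : A.PosSemidef) :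
    ∃ L : (ι → ℝ) →L[ℝ] EuclideanSpace ℝ ι, ∀ v, v ⬝ᵥ A *ᵥ v = ‖L v‖ ^ 2 := by
  classical
  obtain ⟨B, rfl⟩ := CStarAlgebra.nonneg_iff_eq_star_mul_self.mp hA.nonneg
  refine ⟨(EuclideanSpace.equiv ι ℝ).symm.toContinuousLinearMap ∘L
    LinearMap.toContinuousLinearMap (Matrix.toLin' B), fun v => ?_⟩
  simp only [ContinuousLinearMap.coe_comp, Function.comp_apply,
    LinearMap.coe_toContinuousLinearMap', Matrix.toLin'_apply, ContinuousLinearEquiv.coe_coe,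
    EuclideanSpace.real_norm_sq_eq]
  rw [star_eq_conjTranspose, conjTranspose_eq_transpose_of_trivial, ← mulVec_mulVec,
    dotProduct_mulVec, vecMul_transpose, dotProduct]
  simp [sq]

theorem abs_sq_norm_sub_sq_norm_le {E : Type*} [SeminormedAddCommGroup E] (a b : E) :
    |‖a‖ ^ 2 - ‖b‖ ^ 2| ≤ ‖a - b‖ * (‖a‖ + ‖b‖) := by
  rw [sq_sub_sq, abs_mul, abs_of_nonneg (by positivity : 0 ≤ ‖a‖ + ‖b‖), mul_comm]
  gcongr
  exact abs_norm_sub_norm_le a b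

section L2
variable {α E : Type*} [MeasurableSpace α] {μ : Measure α} [NormedAddCommGroup E]

theorem integral_norm_mul_norm_le {f g : α → E} (hf : MemLp f 2 μ) (hg : MemLp g 2 μ) :
    ∫ x, ‖f x‖ * ‖g x‖ ∂μ ≤ √(∫ x, ‖f x‖ ^ 2 ∂μ) * √(∫ x, ‖g x‖ ^ 2 ∂μ) := by
  have h2 : ENNReal.ofReal 2 = 2 := by norm_num
  have := integral_mul_le_Lp_mul_Lq_of_nonneg Real.HolderConjugate.two_two
    (ae_of_all _ fun x => norm_nonneg (f x)) (ae_of_all _ fun x => norm_nonneg (g x))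
    (h2 ▸ hf.norm) (h2 ▸ hg.norm)
  simpa only [Real.rpow_two, ← Real.sqrt_eq_rpow] using this

theorem integral_abs_half_sq_norm_sub_le {a b : α → E} (ha : MemLp a 2 μ) (hb : MemLp b 2 μ) :
    ∫ x, |‖a x‖ ^ 2 / 2 - ‖b x‖ ^ 2 / 2| ∂μ ≤
      √(∫ x, ‖a x - b x‖ ^ 2 ∂μ) * (√(∫ x, ‖a x‖ ^ 2 ∂μ) + √(∫ x, ‖b x‖ ^ 2 ∂μ)) / 2 := by
  have hab : MemLp (a - b) 2 μ := ha.sub hb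
  have hia : Integrable (fun x => ‖a x - b x‖ * ‖a x‖) μ := hab.norm.integrable_mul ha.norm
  have hib : Integrable (fun x => ‖a x - b x‖ * ‖b x‖) μ := hab.norm.integrable_mul hb.norm
  calc ∫ x, |‖a x‖ ^ 2 / 2 - ‖b x‖ ^ 2 / 2| ∂μ
      ≤ ∫ x, (‖a x - b x‖ * ‖a x‖ + ‖a x - b x‖ * ‖b x‖) / 2 ∂μ := by
        refine integral_mono_of_nonneg (ae_of_all _ fun x => abs_nonneg _)
          ((hia.add hib).div_const 2) (ae_of_all _ fun x => ?_)
        have := abs_sq_norm_sub_sq_norm_le (a x) (b x)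
        dsimp only
        rw [← sub_div, abs_div, abs_two]
        linarith
    _ = ((∫ x, ‖a x - b x‖ * ‖a x‖ ∂μ) + ∫ x, ‖a x - b x‖ * ‖b x‖ ∂μ) / 2 := by
        rw [integral_div, integral_add hia hib]
    _ ≤ _ := by
        rw [mul_add]
        gcongr
        exacts [integral_norm_mul_norm_le hab ha, integral_norm_mul_norm_le hab hb]

end L2

lemma exp_neg_sub_exp_neg_le {a : ℝ} (ha : 0 ≤ a) (b : ℝ) : exp (-a) - exp (-b) ≤ |a - b| := by
  have hmul : exp (-a) * (1 + (a - b)) ≤ exp (-b) :=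
    calc exp (-a) * (1 + (a - b)) ≤ exp (-a) * exp (a - b) := by
          gcongr; linarith [add_one_le_exp (a - b)]
      _ = exp (-b) := by rw [← exp_add]; ring_nf
  have hle : exp (-a) ≤ 1 := exp_le_one_iff.mpr (neg_nonpos.mpr ha)
  have hb : b - a ≤ |a - b| := abs_sub_comm a b ▸ le_abs_self (b - a)
  nlinarith [abs_nonneg (a - b), exp_pos (-a)]

section Posterior
variable {α : Type*} [MeasurableSpace α] {μ : Measure α} {Φ Φ₁ Φ₂ : α → ℝ}

lemma posterior_eq_tilted (μ : Measure α) (Φ : α → ℝ) :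
    posterior μ Φ = μ.tilted fun x => -Φ x := rfl

lemma integrable_exp_neg_of_nonneg [IsFiniteMeasure μ] (hΦ : AEStronglyMeasurable Φ μ)
    (h0 : 0 ≤ Φ) : Integrable (fun x => exp (-Φ x)) μ :=
  (integrable_const 1).mono' (continuous_exp.comp_aestronglyMeasurable hΦ.neg)
    (ae_of_all _ fun x => by simpa using h0 x)

lemma isProbabilityMeasure_posterior [IsProbabilityMeasure μ] (hΦ : AEStronglyMeasurable Φ μ)
    (h0 : 0 ≤ Φ) : IsProbabilityMeasure (posterior μ Φ) :=
  isProbabilityMeasure_tilted (integrable_exp_neg_of_nonneg hΦ h0)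

lemma posterior_le_smul (h0 : 0 ≤ Φ) :
    posterior μ Φ ≤ ENNReal.ofReal (∫ x, exp (-Φ x) ∂μ)⁻¹ • μ := by
  refine Measure.le_intro fun s hs _ => ?_
  rw [posterior, withDensity_apply _ hs, Measure.smul_apply, smul_eq_mul,
    ← setLIntegral_const]
  refine setLIntegral_mono measurable_const fun x _ => ENNReal.ofReal_le_ofReal ?_
  rw [div_eq_mul_inv]
  exact mul_le_of_le_one_left (by positivity) (by simpa using h0 x)

lemma integral_posterior_le (h0 : 0 ≤ Φ) {f : α → ℝ} (hf : Integrable f μ) (hf0 : 0 ≤ f) :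
    ∫ x, f x ∂posterior μ Φ ≤ (∫ x, exp (-Φ x) ∂μ)⁻¹ * ∫ x, f x ∂μ := by
  have hZ : 0 ≤ (∫ x, exp (-Φ x) ∂μ)⁻¹ := inv_nonneg.mpr (integral_nonneg fun x => (exp_pos _).le)
  calc ∫ x, f x ∂posterior μ Φ ≤ ∫ x, f x ∂(ENNReal.ofReal (∫ x, exp (-Φ x) ∂μ)⁻¹ • μ) :=
        integral_mono_measure (posterior_le_smul h0) (ae_of_all _ hf0)
          (hf.smul_measure ofReal_ne_top)
    _ = _ := by rw [integral_smul_measure, ENNReal.toReal_ofReal hZ, smul_eq_mul]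

lemma inv_integral_exp_neg_le_exp_integral [IsProbabilityMeasure μ] (hΦ : Integrable Φ μ)
    (h0 : 0 ≤ Φ) : (∫ x, exp (-Φ x) ∂μ)⁻¹ ≤ exp (∫ x, Φ x ∂μ) := by
  have hJensen : exp (∫ x, -Φ x ∂μ) ≤ ∫ x, exp (-Φ x) ∂μ :=
    convexOn_exp.map_integral_le continuous_exp.continuousOn isClosed_univ
      (ae_of_all _ fun _ => Set.mem_univ _) hΦ.neg (integrable_exp_neg_of_nonneg hΦ.1 h0)
  rw [integral_neg, exp_neg] at hJensen
  exact inv_le_of_inv_le₀ (exp_pos _) hJensen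

lemma llr_posterior_ae_eq [SigmaFinite μ] (h₁ : Integrable (fun x => exp (-Φ₁ x)) μ)
    (h₂ : Integrable (fun x => exp (-Φ₂ x)) μ) :
    llr (posterior μ Φ₁) (posterior μ Φ₂) =ᵐ[posterior μ Φ₁] fun x =>
      Φ₂ x - Φ₁ x + log (∫ x, exp (-Φ₂ x) ∂μ) - log (∫ x, exp (-Φ₁ x) ∂μ) := by
  simp only [posterior_eq_tilted]
  have hac := tilted_absolutelyContinuous μ fun x => -Φ₁ x
  filter_upwards [llr_tilted_right hac h₂, hac.ae_le (log_rnDeriv_tilted_left_self h₁)]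
    with x hright hleft
  rw [hright, llr, hleft]
  ring

lemma KLdiv_posterior_eq [IsProbabilityMeasure μ] (hi₁ : Integrable Φ₁ μ)
    (hi₂ : Integrable Φ₂ μ) (h₁ : 0 ≤ Φ₁) (h₂ : 0 ≤ Φ₂) :
    KLdiv (posterior μ Φ₁) (posterior μ Φ₂) = ENNReal.ofReal ((∫ x, Φ₂ x - Φ₁ x ∂posterior μ Φ₁) +
      log (∫ x, exp (-Φ₂ x) ∂μ) - log (∫ x, exp (-Φ₁ x) ∂μ)) := by
  have he₁ := integrable_exp_neg_of_nonneg hi₁.1 h₁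
  have he₂ := integrable_exp_neg_of_nonneg hi₂.1 h₂
  have := isProbabilityMeasure_posterior hi₁.1 h₁
  have hac : posterior μ Φ₁ ≪ posterior μ Φ₂ :=
    (tilted_absolutelyContinuous μ _).trans (absolutelyContinuous_tilted he₂)
  have hint : Integrable (fun x => Φ₂ x - Φ₁ x) (posterior μ Φ₁) :=
    ((hi₂.sub hi₁).smul_measure ofReal_ne_top).mono_measure (posterior_le_smul h₁)
  have hllr := llr_posterior_ae_eq he₁ he₂
  have hint_llr : Integrable (llr (posterior μ Φ₁) (posterior μ Φ₂)) (posterior μ Φ₁) :=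
    ((hint.add (integrable_const _)).sub (integrable_const _)).congr hllr.symm
  rw [KLdiv, if_pos ⟨hac, hint_llr⟩, ← llr_def, integral_congr_ae hllr]
  simp [integral_sub, integral_add, hint]

lemma log_integral_exp_neg_sub_log_le [IsFiniteMeasure μ] [NeZero μ] (hi₁ : Integrable Φ₁ μ)
    (hi₂ : Integrable Φ₂ μ) (h₁ : 0 ≤ Φ₁) (h₂ : 0 ≤ Φ₂) :
    log (∫ x, exp (-Φ₂ x) ∂μ) - log (∫ x, exp (-Φ₁ x) ∂μ) ≤
      (∫ x, exp (-Φ₁ x) ∂μ)⁻¹ * ∫ x, |Φ₂ x - Φ₁ x| ∂μ := by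
  have he₁ := integrable_exp_neg_of_nonneg hi₁.1 h₁
  have he₂ := integrable_exp_neg_of_nonneg hi₂.1 h₂
  set Z₁ := ∫ x, exp (-Φ₁ x) ∂μ
  set Z₂ := ∫ x, exp (-Φ₂ x) ∂μ
  have hZ₁ : 0 < Z₁ := integral_exp_pos he₁
  have hZ₂ : 0 < Z₂ := integral_exp_pos he₂
  have hZ : Z₂ - Z₁ ≤ ∫ x, |Φ₂ x - Φ₁ x| ∂μ := by
    rw [← integral_sub he₂ he₁]
    exact integral_mono (he₂.sub he₁) (hi₂.sub hi₁).abs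
      fun x => exp_neg_sub_exp_neg_le (h₂ x) _
  calc log Z₂ - log Z₁ = log (Z₂ / Z₁) := (log_div hZ₂.ne' hZ₁.ne').symm
    _ ≤ Z₂ / Z₁ - 1 := log_le_sub_one_of_pos (by positivity)
    _ = Z₁⁻¹ * (Z₂ - Z₁) := by field_simp
    _ ≤ Z₁⁻¹ * ∫ x, |Φ₂ x - Φ₁ x| ∂μ := by gcongr

theorem KLdiv_posterior_le [IsProbabilityMeasure μ] (hi₁ : Integrable Φ₁ μ)
    (hi₂ : Integrable Φ₂ μ) (h₁ : 0 ≤ Φ₁) (h₂ : 0 ≤ Φ₂) :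
    KLdiv (posterior μ Φ₁) (posterior μ Φ₂) ≤
      ENNReal.ofReal (2 * exp (∫ x, Φ₁ x ∂μ) * ∫ x, |Φ₁ x - Φ₂ x| ∂μ) := by
  simp_rw [abs_sub_comm (Φ₁ _)]
  rw [KLdiv_posterior_eq hi₁ hi₂ h₁ h₂]
  refine ENNReal.ofReal_le_ofReal ?_
  have hfirst : ∫ x, Φ₂ x - Φ₁ x ∂posterior μ Φ₁ ≤
      (∫ x, exp (-Φ₁ x) ∂μ)⁻¹ * ∫ x, |Φ₂ x - Φ₁ x| ∂μ :=
    (le_abs_self _).trans <| abs_integral_le_integral_abs.trans <|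
      integral_posterior_le h₁ (hi₂.sub hi₁).abs fun x => abs_nonneg _
  have hsecond := log_integral_exp_neg_sub_log_le hi₁ hi₂ h₁ h₂
  have hZ := inv_integral_exp_neg_le_exp_integral hi₁ h₁
  have hD : 0 ≤ ∫ x, |Φ₂ x - Φ₁ x| ∂μ := integral_nonneg fun x => abs_nonneg _
  nlinarith [mul_le_mul_of_nonneg_right hZ hD]

end Posterior

lemma prod_posterior_left {α β : Type*} [MeasurableSpace α] [MeasurableSpace β] {μ : Measure α}
    [SFinite μ] (ν : Measure β) [IsProbabilityMeasure ν] {Φ : α → ℝ} (hΦ : AEMeasurable Φ μ) :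
    (posterior μ Φ).prod ν = posterior (μ.prod ν) fun p => Φ p.1 := by
  have hZ : ∫ p, exp (-Φ p.1) ∂μ.prod ν = ∫ x, exp (-Φ x) ∂μ := by
    simpa using integral_fun_fst (μ := μ) (ν := ν) fun x => exp (-Φ x)
  rw [posterior, posterior, prod_withDensity_left₀ (by fun_prop), hZ]

theorem KLdiv_posterior_half_sq_norm_le {α E : Type*} [MeasurableSpace α] {μ : Measure α}
    [IsProbabilityMeasure μ] [NormedAddCommGroup E] {a b : α → E} (ha : MemLp a 2 μ)
    (hb : MemLp b 2 μ) :
    KLdiv (posterior μ fun x => ‖a x‖ ^ 2 / 2) (posterior μ fun x => ‖b x‖ ^ 2 / 2) ≤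
      ENNReal.ofReal (√2 * exp (∫ x, ‖a x‖ ^ 2 / 2 ∂μ) *
        (√(∫ x, ‖a x‖ ^ 2 / 2 ∂μ) + √(∫ x, ‖b x‖ ^ 2 / 2 ∂μ)) * √(∫ x, ‖a x - b x‖ ^ 2 ∂μ)) := by
  have hia := ((memLp_two_iff_integrable_sq_norm ha.1).1 ha).div_const 2
  have hib := ((memLp_two_iff_integrable_sq_norm hb.1).1 hb).div_const 2
  refine (KLdiv_posterior_le hia hib (fun x => by positivity) (fun x => by positivity)).trans
    (ENNReal.ofReal_le_ofReal ?_)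
  calc 2 * exp (∫ x, ‖a x‖ ^ 2 / 2 ∂μ) * ∫ x, |‖a x‖ ^ 2 / 2 - ‖b x‖ ^ 2 / 2| ∂μ
      ≤ 2 * exp (∫ x, ‖a x‖ ^ 2 / 2 ∂μ) * (√(∫ x, ‖a x - b x‖ ^ 2 ∂μ) *
          (√(∫ x, ‖a x‖ ^ 2 ∂μ) + √(∫ x, ‖b x‖ ^ 2 ∂μ)) / 2) := by
        gcongr
        exact integral_abs_half_sq_norm_sub_le ha hb
    _ = _ := by
        rw [integral_div, integral_div, sqrt_div' _ zero_le_two, sqrt_div' _ zero_le_two]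
        field_simp

theorem max_KLdiv_posterior_half_sq_norm_le {α E : Type*} [MeasurableSpace α] {μ : Measure α}
    [IsProbabilityMeasure μ] [NormedAddCommGroup E] {a b : α → E}
    (ha : AEStronglyMeasurable a μ) (hb : AEStronglyMeasurable b μ)
    (hia : Integrable (fun x => ‖a x‖ ^ 2 / 2) μ) (hib : Integrable (fun x => ‖b x‖ ^ 2 / 2) μ) :
    max (KLdiv (posterior μ fun x => ‖a x‖ ^ 2 / 2) (posterior μ fun x => ‖b x‖ ^ 2 / 2))
        (KLdiv (posterior μ fun x => ‖b x‖ ^ 2 / 2) (posterior μ fun x => ‖a x‖ ^ 2 / 2)) ≤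
      ENNReal.ofReal (√2 * exp (2 * (∫ x, ‖b x‖ ^ 2 / 2 ∂μ) + 2 * ∫ x, ‖a x‖ ^ 2 / 2 ∂μ) *
        (√(∫ x, ‖b x‖ ^ 2 / 2 ∂μ) + √(∫ x, ‖a x‖ ^ 2 / 2 ∂μ)) * √(∫ x, ‖a x - b x‖ ^ 2 ∂μ)) := by
  have hma : MemLp a 2 μ := (memLp_two_iff_integrable_sq_norm ha).2 <| by
    simpa only [div_mul_cancel₀ _ (two_ne_zero (α := ℝ))] using hia.mul_const 2
  have hmb : MemLp b 2 μ := (memLp_two_iff_integrable_sq_norm hb).2 <| by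
    simpa only [div_mul_cancel₀ _ (two_ne_zero (α := ℝ))] using hib.mul_const 2
  have hA : 0 ≤ ∫ x, ‖a x‖ ^ 2 / 2 ∂μ := integral_nonneg fun x => by positivity
  have hB : 0 ≤ ∫ x, ‖b x‖ ^ 2 / 2 ∂μ := integral_nonneg fun x => by positivity
  refine max_le ((KLdiv_posterior_half_sq_norm_le hma hmb).trans (ENNReal.ofReal_le_ofReal ?_))
    ((KLdiv_posterior_half_sq_norm_le hmb hma).trans (ENNReal.ofReal_le_ofReal ?_))
  · rw [add_comm √(∫ x, ‖a x‖ ^ 2 / 2 ∂μ)]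
    gcongr
    linarith
  · simp_rw [norm_sub_rev (b _)]
    gcongr
    linarith

theorem stmt13_general {X W U : Type*} [MeasurableSpace X] [MeasurableSpace W]
    [NormedAddCommGroup U] [NormedSpace ℝ U]
    [MeasurableSpace U] [BorelSpace U]
    (μθ : Measure X) [IsProbabilityMeasure μθ] (μδ : Measure W) [IsProbabilityMeasure μδ]
    {n : ℕ}
    (Mappr : X → U) (hMappr : Measurable Mappr)
    (e : X × W → U) (he : Measurable e)
    (O : U →L[ℝ] (Fin n → ℝ)) (y : Fin n → ℝ)
    (Γ : Matrix (Fin n) (Fin n) ℝ) (hΓ : Γ.PosDef)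
    (Φappr : X → ℝ) (Φjoint : X × W → ℝ)
    (hΦappr : Φappr = fun θ => (1/2) * ((y - O (Mappr θ)) ⬝ᵥ (Γ⁻¹ *ᵥ (y - O (Mappr θ)))))
    (hΦjoint : Φjoint = fun p => (1/2) *
      ((y - O (Mappr p.1) - O (e p)) ⬝ᵥ (Γ⁻¹ *ᵥ (y - O (Mappr p.1) - O (e p)))))
    (hia : Integrable Φappr μθ) (hij : Integrable Φjoint (μθ.prod μδ)) :
    max (KLdiv ((posterior μθ Φappr).prod μδ) (posterior (μθ.prod μδ) Φjoint))
        (KLdiv (posterior (μθ.prod μδ) Φjoint) ((posterior μθ Φappr).prod μδ)) ≤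
      ENNReal.ofReal
        ((Real.sqrt 2 *
            Real.exp (2 * (∫ p, |Φjoint p| ∂(μθ.prod μδ)) + 2 * ∫ θ, |Φappr θ| ∂μθ) *
            (Real.sqrt (∫ p, |Φjoint p| ∂(μθ.prod μδ)) + Real.sqrt (∫ θ, |Φappr θ| ∂μθ))) *
          Real.sqrt (∫ p, |(O (e p)) ⬝ᵥ (Γ⁻¹ *ᵥ (O (e p)))| ∂(μθ.prod μδ))) := by
  obtain ⟨L, hL⟩ := hΓ.inv.posSemidef.exists_dotProduct_mulVec_eq_norm_sq
  set a := fun p : X × W => L (y - O (Mappr p.1))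
  set b := fun p : X × W => L (y - O (Mappr p.1) - O (e p))
  have hΦa : (fun p : X × W => Φappr p.1) = fun p => ‖a p‖ ^ 2 / 2 := by
    funext p; simp only [hΦappr, hL, a]; ring
  have hΦb : Φjoint = fun p => ‖b p‖ ^ 2 / 2 := by
    funext p; simp only [hΦjoint, hL, b]; ring
  have hQ (p : X × W) : |O (e p) ⬝ᵥ Γ⁻¹ *ᵥ O (e p)| = ‖a p - b p‖ ^ 2 := by
    rw [hL, abs_of_nonneg (sq_nonneg _), ← map_sub, _root_.sub_sub_cancel]
  have hIa : ∫ θ, |Φappr θ| ∂μθ = ∫ p, ‖a p‖ ^ 2 / 2 ∂(μθ.prod μδ) := by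
    have hΦa0 (θ : X) : 0 ≤ Φappr θ := by simp only [hΦappr, hL]; positivity
    simp_rw [abs_of_nonneg (hΦa0 _), ← hΦa]
    simp [integral_fun_fst]
  have hIb : ∫ p, |Φjoint p| ∂(μθ.prod μδ) = ∫ p, ‖b p‖ ^ 2 / 2 ∂(μθ.prod μδ) := by
    simp_rw [hΦb, abs_of_nonneg (by positivity : (0 : ℝ) ≤ ‖_‖ ^ 2 / 2)]
  rw [hIa, hIb, integral_congr_ae (ae_of_all _ hQ), prod_posterior_left μδ hia.1.aemeasurable,
    hΦa, hΦb]
  exact max_KLdiv_posterior_half_sq_norm_le (by fun_prop) (by fun_prop) (hΦa ▸ hia.comp_fst μδ)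
    (hΦb ▸ hij)

theorem stmt13 {X W U : Type*} [MeasurableSpace X] [MeasurableSpace W]
    [NormedAddCommGroup U] [NormedSpace ℝ U] [CompleteSpace U]
    [MeasurableSpace U] [BorelSpace U]
    (μθ : Measure X) [IsProbabilityMeasure μθ] (μδ : Measure W) [IsProbabilityMeasure μδ]
    {n : ℕ}
    (Mappr : X → U) (hMappr : Measurable Mappr)
    (e : X × W → U) (he : Measurable e)
    (O : U →L[ℝ] (Fin n → ℝ)) (y : Fin n → ℝ)
    (Γ : Matrix (Fin n) (Fin n) ℝ) (hΓ : Γ.PosDef)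
    (Φappr : X → ℝ) (Φjoint : X × W → ℝ)
    (hΦappr : Φappr = fun θ => (1/2) * ((y - O (Mappr θ)) ⬝ᵥ (Γ⁻¹ *ᵥ (y - O (Mappr θ)))))
    (hΦjoint : Φjoint = fun p => (1/2) *
      ((y - O (Mappr p.1) - O (e p)) ⬝ᵥ (Γ⁻¹ *ᵥ (y - O (Mappr p.1) - O (e p)))))
    (hia : Integrable Φappr μθ) (hij : Integrable Φjoint (μθ.prod μδ)) :
    max (KLdiv ((posterior μθ Φappr).prod μδ) (posterior (μθ.prod μδ) Φjoint))
        (KLdiv (posterior (μθ.prod μδ) Φjoint) ((posterior μθ Φappr).prod μδ)) ≤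
      ENNReal.ofReal
        ((Real.sqrt 2 *
            Real.exp (2 * (∫ p, |Φjoint p| ∂(μθ.prod μδ)) + 2 * ∫ θ, |Φappr θ| ∂μθ) *
            (Real.sqrt (∫ p, |Φjoint p| ∂(μθ.prod μδ)) + Real.sqrt (∫ θ, |Φappr θ| ∂μθ))) *
          Real.sqrt (∫ p, |(O (e p)) ⬝ᵥ (Γ⁻¹ *ᵥ (O (e p)))| ∂(μθ.prod μδ))) :=
  stmt13_general μθ μδ Mappr hMappr e he O y Γ hΓ Φappr Φjoint hΦappr hΦjoint hia hij
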